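/- Persistency: Let M be a loopless matroid and x : E → ℝ a weighting. An element e belongs to every x-optimal basis if and only if μ_e(x) > x(e); e belongs to no x-optimal basis if and only if μ_e(x) < x(e); and e belongs to some but not all x-optimal bases if and only if μ_e(x) = x(e). -/

import Mathlib

open Matroid Set

variable {α : Type*}

/-- A circuit of a matroid: a minimal dependent set. -/
def Matroid.IsCircuitDef (M : Matroid α) (C : Set α) : Prop :=
  M.Dep C ∧ ∀ ⦃D⦄, D ⊂ C → M.Indep D

/-- Looplessness in the sense of the paper: no element is a loop
(every singleton of the ground set is independent) and no element is a
coloop (no element lies in all bases). -/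
def Matroid.PaperLoopless (M : Matroid α) : Prop :=
  ∀ e ∈ M.E, M.Indep {e} ∧ ∃ B, M.IsBase B ∧ e ∉ B

/-- The weight `x(B)` of a set of ground elements. -/
noncomputable def setWeight (x : α → ℝ) (B : Set α) : ℝ := ∑ᶠ e ∈ B, x e

/-- The min-max weight `μ_e(x)`: the minimum over circuits `C` containing `e`
of the maximum weight of an element of `C - e`. -/
noncomputable def muWeight (M : Matroid α) (x : α → ℝ) (e : α) : ℝ :=
  sInf {w | ∃ C, M.IsCircuitDef C ∧ e ∈ C ∧ w = sSup (x '' (C \ {e}))}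

/-- The bottleneck weight `b_e(x) = min {x(e), μ_e(x)}`. -/
noncomputable def bottleneck (M : Matroid α) (x : α → ℝ) (e : α) : ℝ :=
  min (x e) (muWeight M x e)

/-- The minimum weight of a basis of `M`. -/
noncomputable def mwb (M : Matroid α) (x : α → ℝ) : ℝ :=
  sInf {w | ∃ B, M.IsBase B ∧ w = setWeight x B}

/-- `B` is an `x`-optimal basis of `M`. -/
def IsOptimalBase (M : Matroid α) (x : α → ℝ) (B : Set α) : Prop :=
  M.IsBase B ∧ ∀ B', M.IsBase B' → setWeight x B ≤ setWeight x B'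

/-- Deletion of a single element. -/
noncomputable def Matroid.del (M : Matroid α) (e : α) : Matroid α :=
  M ↾ (M.E \ {e})

/-- Contraction of a single element, defined by duality: `M/e = (M✶ \ e)✶`. -/
noncomputable def Matroid.con (M : Matroid α) (e : α) : Matroid α :=
  ((M✶ ↾ (M.E \ {e}))✶)


namespace Matroid

variable {M : Matroid α} {B C : Set α} {e f : α}

lemma isCircuitDef_iff : M.IsCircuitDef C ↔ M.IsCircuit C :=
  isCircuit_iff_forall_ssubset.symm

lemma IsCircuit.sdiff_singleton_nonempty (hC : M.IsCircuit C) (he : M.Indep {e}) :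
    (C \ {e}).Nonempty := by
  rw [nonempty_iff_ne_empty, Ne, sdiff_eq_empty]
  exact fun hCe ↦ hC.not_indep (he.subset hCe)

lemma IsBase.exists_isCircuit_exchange (hB : M.IsBase B) (heB : e ∈ B) (hC : M.IsCircuit C)
    (heC : e ∈ C) : ∃ f ∈ C \ {e}, f ∉ B ∧ M.IsBase (insert f B \ {e}) := by
  have hCB : ¬ C \ {e} ⊆ M.closure (B \ {e}) := fun h ↦
    hB.indep.notMem_closure_sdiff_of_mem heB
      (M.closure_subset_closure_of_subset_closure h (hC.mem_closure_sdiff_singleton_of_mem heC))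
  obtain ⟨f, hf, hfcl⟩ := not_subset.1 hCB
  have hfB : f ∉ B := fun hfB ↦ hfcl (M.subset_closure _ (sdiff_subset.trans hB.subset_ground)
    ⟨hfB, hf.2⟩)
  refine ⟨f, hf, hfB, ?_⟩
  rw [← insert_sdiff_singleton_comm hf.2]
  exact hB.exchange_base_of_notMem_closure heB hfcl (hC.subset_ground hf.1)

lemma IsBase.isBase_insert_sdiff_of_mem_fundCircuit (hB : M.IsBase B) (he : e ∈ M.E)
    (heB : e ∉ B) (hf : f ∈ M.fundCircuit e B \ {e}) :
    f ∈ B ∧ M.IsBase (insert e B \ {f}) := by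
  have hfB : f ∈ B := (M.fundCircuit_subset_insert e B hf.1).resolve_left hf.2
  refine ⟨hfB, hB.exchange_isBase_of_indep' hfB heB ?_⟩
  exact (hB.indep.mem_fundCircuit_iff (by rwa [hB.closure_eq]) heB).1 hf.1

lemma IsCircuit.le_sSup_image_sdiff [M.Finitary] (x : α → ℝ) (hC : M.IsCircuit C)
    (hf : f ∈ C \ {e}) : x f ≤ sSup (x '' (C \ {e})) :=
  le_csSup (hC.finite.sdiff.image x).bddAbove (mem_image_of_mem x hf)

end Matroid

section OptimalBase

lemma exists_isOptimalBase (M : Matroid α) [M.Finite] (x : α → ℝ) : ∃ B, IsOptimalBase M x B := by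
  have hfin : {B | M.IsBase B}.Finite :=
    M.ground_finite.finite_subsets.subset fun _ hB ↦ hB.subset_ground
  obtain ⟨B, hB, hmin⟩ := exists_min_image _ (setWeight x) hfin M.exists_isBase
  exact ⟨B, hB, hmin⟩

variable {M : Matroid α} {x : α → ℝ} {B : Set α} {a b : α}

lemma setWeight_insert_sdiff_singleton (hB : B.Finite) (ha : a ∉ B) (hb : b ∈ B) :
    setWeight x (insert a B \ {b}) = setWeight x B + x a - x b := by
  have hinsert := finsum_mem_insert x ha hB
  have hsplit := finsum_mem_add_sdiff (f := x) (singleton_subset_iff.2 (mem_insert_of_mem a hb))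
    (hB.insert a)
  rw [finsum_mem_singleton] at hsplit
  unfold setWeight
  linarith

variable [M.RankFinite]

lemma IsOptimalBase.le_of_exchange (hB : IsOptimalBase M x B) (ha : a ∉ B) (hb : b ∈ B)
    (hB' : M.IsBase (insert a B \ {b})) : x b ≤ x a := by
  have := hB.2 _ hB'
  rw [setWeight_insert_sdiff_singleton hB.1.finite ha hb] at this
  linarith

lemma IsOptimalBase.exchange (hB : IsOptimalBase M x B) (ha : a ∉ B) (hb : b ∈ B)
    (hB' : M.IsBase (insert a B \ {b})) (hab : x a ≤ x b) :
    IsOptimalBase M x (insert a B \ {b}) := by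
  refine ⟨hB', fun B'' hB'' ↦ ?_⟩
  rw [setWeight_insert_sdiff_singleton hB.1.finite ha hb]
  linarith [hB.2 B'' hB'']

end OptimalBase

section MuWeight

lemma muWeight_eq_sInf_image (M : Matroid α) (x : α → ℝ) (e : α) :
    muWeight M x e = sInf ((fun C ↦ sSup (x '' (C \ {e}))) '' {C | M.IsCircuit C ∧ e ∈ C}) := by
  simp only [muWeight, isCircuitDef_iff, image, mem_ofPred_eq, and_assoc, eq_comm]

lemma finite_setOf_isCircuit_mem (M : Matroid α) [M.Finite] (e : α) :
    {C | M.IsCircuit C ∧ e ∈ C}.Finite :=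
  M.ground_finite.finite_subsets.subset fun _ hC ↦ hC.1.subset_ground

variable {M : Matroid α} [M.Finite] {C : Set α} {e : α}

lemma muWeight_le (x : α → ℝ) (hC : M.IsCircuit C) (heC : e ∈ C) :
    muWeight M x e ≤ sSup (x '' (C \ {e})) := by
  rw [muWeight_eq_sInf_image]
  exact csInf_le ((finite_setOf_isCircuit_mem M e).image _).bddBelow ⟨C, ⟨hC, heC⟩, rfl⟩

lemma exists_isCircuit_muWeight_eq (x : α → ℝ) (h : ∃ C, M.IsCircuit C ∧ e ∈ C) :
    ∃ C, M.IsCircuit C ∧ e ∈ C ∧ muWeight M x e = sSup (x '' (C \ {e})) := by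
  rw [muWeight_eq_sInf_image]
  obtain ⟨C, ⟨hC, heC⟩, hμ⟩ := (Set.Nonempty.image (fun C ↦ sSup (x '' (C \ {e}))) h).csInf_mem
    ((finite_setOf_isCircuit_mem M e).image _)
  exact ⟨C, hC, heC, hμ.symm⟩

end MuWeight

section Persistency

variable {M : Matroid α} [M.Finite] {x : α → ℝ} {e : α}

theorem lt_muWeight_of_forall_isOptimalBase_mem (hcirc : ∃ C, M.IsCircuit C ∧ e ∈ C)
    (h : ∀ B, IsOptimalBase M x B → e ∈ B) : x e < muWeight M x e := by
  obtain ⟨B, hB⟩ := exists_isOptimalBase M x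
  obtain ⟨C, hC, heC, hμ⟩ := exists_isCircuit_muWeight_eq x hcirc
  obtain ⟨f, hf, hfB, hB'⟩ := hB.1.exists_isCircuit_exchange (h B hB) hC heC
  have hef : x e < x f := lt_of_not_ge fun hfe ↦
    (h _ (hB.exchange hfB (h B hB) hB' hfe)).2 rfl
  exact hμ ▸ hef.trans_le (hC.le_sSup_image_sdiff x hf)

theorem muWeight_lt_of_forall_isOptimalBase_notMem (he : e ∈ M.E) (hloop : M.Indep {e})
    (h : ∀ B, IsOptimalBase M x B → e ∉ B) : muWeight M x e < x e := by
  obtain ⟨B, hB⟩ := exists_isOptimalBase M x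
  have hC := hB.1.fundCircuit_isCircuit he (h B hB)
  refine (muWeight_le x hC (M.mem_fundCircuit e B)).trans_lt ?_
  rw [(hC.finite.sdiff.image x).csSup_lt_iff ((hC.sdiff_singleton_nonempty hloop).image x)]
  rintro _ ⟨f, hf, rfl⟩
  obtain ⟨hfB, hB'⟩ := hB.1.isBase_insert_sdiff_of_mem_fundCircuit he (h B hB) hf
  exact lt_of_not_ge fun hef ↦
    h _ (hB.exchange (h B hB) hfB hB' hef) ⟨mem_insert e B, Ne.symm hf.2⟩

theorem muWeight_eq_of_isOptimalBase_mem_of_notMem (he : e ∈ M.E) (hloop : M.Indep {e})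
    (hmem : ∃ B, IsOptimalBase M x B ∧ e ∈ B) (hnotMem : ∃ B, IsOptimalBase M x B ∧ e ∉ B) :
    muWeight M x e = x e := by
  obtain ⟨B₁, hB₁, heB₁⟩ := hmem
  obtain ⟨B₂, hB₂, heB₂⟩ := hnotMem
  have hC₂ := hB₂.1.fundCircuit_isCircuit he heB₂
  refine le_antisymm ((muWeight_le x hC₂ (M.mem_fundCircuit e B₂)).trans ?_) ?_
  · refine csSup_le ((hC₂.sdiff_singleton_nonempty hloop).image x) ?_
    rintro _ ⟨f, hf, rfl⟩
    obtain ⟨hfB, hB'⟩ := hB₂.1.isBase_insert_sdiff_of_mem_fundCircuit he heB₂ hf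
    exact hB₂.le_of_exchange heB₂ hfB hB'
  · obtain ⟨C, hC, heC, hμ⟩ := exists_isCircuit_muWeight_eq x ⟨_, hC₂, M.mem_fundCircuit e B₂⟩
    obtain ⟨f, hf, hfB, hB'⟩ := hB₁.1.exists_isCircuit_exchange heB₁ hC heC
    exact hμ ▸ (hB₁.le_of_exchange hfB heB₁ hB').trans (hC.le_sSup_image_sdiff x hf)

end Persistency

theorem iff_lt_and_iff_gt_and_iff_eq_of_imp {β : Type*} [LinearOrder β] {P Q R : Prop} {a b : β}
    (hR : R ↔ ¬Q ∧ ¬P) (hP : P → a < b) (hQ : Q → b < a) (hReq : R → b = a) :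
    (P ↔ a < b) ∧ (Q ↔ b < a) ∧ (R ↔ b = a) := by
  grind

/-- persistency. -/
theorem stmt18 (M : Matroid α) [M.Finite] (hM : M.PaperLoopless)
    (x : α → ℝ) {e : α} (he : e ∈ M.E) :
    ((∀ B, IsOptimalBase M x B → e ∈ B) ↔ x e < muWeight M x e) ∧
    ((∀ B, IsOptimalBase M x B → e ∉ B) ↔ muWeight M x e < x e) ∧
    (((∃ B, IsOptimalBase M x B ∧ e ∈ B) ∧ (∃ B, IsOptimalBase M x B ∧ e ∉ B)) ↔
      muWeight M x e = x e) := by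
  obtain ⟨hloop, B, hB, heB⟩ := hM e he
  refine iff_lt_and_iff_gt_and_iff_eq_of_imp (by simp only [not_forall, not_not, exists_prop])
    (lt_muWeight_of_forall_isOptimalBase_mem ⟨_, hB.fundCircuit_isCircuit he heB,
      M.mem_fundCircuit e B⟩)
    (muWeight_lt_of_forall_isOptimalBase_notMem he hloop)
    fun h ↦ muWeight_eq_of_isOptimalBase_mem_of_notMem he hloop h.1 h.2
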